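/- Let ψ : [1,∞) → ℝ be smooth, increasing, nonnegative, such that for every integer k ≥ 1 there is C_k > 0 with |ψ^{(k)}(s)| ≤ C_k s^{−k} ψ(s) for all s ≥ 1, and assume additionally that ψ(s) ≤ C₀ s for all s ≥ 1 and some C₀ > 0. Then there exists a constant C > 0 such that |ψ′(⟨ξ+ζ⟩) − ψ′(⟨ξ⟩)| ≤ C ⟨ζ⟩ ⟨ξ⟩^{−1} for all ξ, ζ ∈ ℝ^n. -/

import Mathlib

noncomputable section

open Real Set Filter MeasureTheory

/-- Japanese bracket `⟨ξ⟩ = (1 + |ξ|²)^(1/2)`. -/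
def jb {n : ℕ} (ξ : EuclideanSpace ℝ (Fin n)) : ℝ := Real.sqrt (1 + ‖ξ‖ ^ 2)

/-- Partial derivative in the `i`-th coordinate direction. -/
def pd {n : ℕ} (i : Fin n) (f : EuclideanSpace ℝ (Fin n) → ℝ) :
    EuclideanSpace ℝ (Fin n) → ℝ :=
  fun x => fderiv ℝ f x (EuclideanSpace.single i 1)

/-- Iterated partial derivative `∂^α` for a multi-index `α : Fin n → ℕ`. -/
def md {n : ℕ} (α : Fin n → ℕ) (f : EuclideanSpace ℝ (Fin n) → ℝ) :
    EuclideanSpace ℝ (Fin n) → ℝ :=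
  (List.finRange n).foldr (fun i g => (pd i)^[α i] g) f

lemma jb_one_le {n : ℕ} (ξ : EuclideanSpace ℝ (Fin n)) : 1 ≤ jb ξ := by
  have h : (1:ℝ) ≤ 1 + ‖ξ‖ ^ 2 := by nlinarith [sq_nonneg ‖ξ‖]
  have := Real.sqrt_le_sqrt h
  rwa [Real.sqrt_one] at this

lemma norm_le_jb {n : ℕ} (ξ : EuclideanSpace ℝ (Fin n)) : ‖ξ‖ ≤ jb ξ := by
  rw [show ‖ξ‖ = Real.sqrt (‖ξ‖ ^ 2) from (Real.sqrt_sq (norm_nonneg _)).symm]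
  exact Real.sqrt_le_sqrt (by linarith)

lemma jb_le_add {n : ℕ} (x y : EuclideanSpace ℝ (Fin n)) :
    jb x ≤ jb y + ‖x - y‖ := by
  set d := ‖x - y‖ with hd
  have hd0 : 0 ≤ d := norm_nonneg _
  have hx : ‖x‖ ≤ ‖y‖ + d := by
    have := norm_sub_norm_le x y
    linarith [abs_le.mp (abs_norm_sub_norm_le x y)]
  have h1 : jb x ≤ Real.sqrt (1 + (‖y‖ + d) ^ 2) := by
    apply Real.sqrt_le_sqrt
    nlinarith [norm_nonneg x, norm_nonneg y]
  refine h1.trans ?_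
  have hsq : Real.sqrt (1 + ‖y‖ ^ 2) ^ 2 = 1 + ‖y‖ ^ 2 :=
    Real.sq_sqrt (by positivity)
  have hyle : ‖y‖ ≤ Real.sqrt (1 + ‖y‖ ^ 2) := norm_le_jb y
  have hpos : 0 ≤ Real.sqrt (1 + ‖y‖ ^ 2) + d := by positivity
  show Real.sqrt (1 + (‖y‖ + d) ^ 2) ≤ Real.sqrt (1 + ‖y‖ ^ 2) + d
  rw [show Real.sqrt (1 + ‖y‖ ^ 2) + d = Real.sqrt ((Real.sqrt (1 + ‖y‖ ^ 2) + d) ^ 2) from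
    (Real.sqrt_sq hpos).symm]
  apply Real.sqrt_le_sqrt
  nlinarith

/-- Estimate (2.14): the difference of ψ′ at shifted Japanese brackets. -/
theorem stmt3 {n : ℕ} (ψ : ℝ → ℝ)
    (hψsmooth : ContDiff ℝ (⊤ : ℕ∞) ψ)
    (hψmono : MonotoneOn ψ (Set.Ici 1))
    (hψnonneg : ∀ s : ℝ, 1 ≤ s → 0 ≤ ψ s)
    (hψder : ∀ k : ℕ, 1 ≤ k → ∃ C > 0, ∀ s : ℝ, 1 ≤ s →
      |iteratedDeriv k ψ s| ≤ C * ψ s / s ^ k)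
    (C₀ : ℝ) (hC₀ : 0 < C₀) (hψlin : ∀ s : ℝ, 1 ≤ s → ψ s ≤ C₀ * s) :
    ∃ C > 0, ∀ ξ ζ : EuclideanSpace ℝ (Fin n),
      |deriv ψ (jb (ξ + ζ)) - deriv ψ (jb ξ)| ≤ C * jb ζ / jb ξ := by
  obtain ⟨C₁, hC₁, h1⟩ := hψder 1 le_rfl
  obtain ⟨C₂, hC₂, h2⟩ := hψder 2 (by norm_num)
  refine ⟨4 * C₀ * (C₁ + C₂), by positivity, fun ξ ζ => ?_⟩
  set a := jb (ξ + ζ) with ha'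
  set b := jb ξ with hb'
  set z := jb ζ with hz'
  have ha : 1 ≤ a := jb_one_le _
  have hb : 1 ≤ b := jb_one_le _
  have hz : 1 ≤ z := jb_one_le _
  have hab : |a - b| ≤ z := by
    have h1' : a ≤ b + ‖ζ‖ := by
      have := jb_le_add (ξ + ζ) ξ
      simpa [add_sub_cancel_left] using this
    have h2' : b ≤ a + ‖ζ‖ := by
      have := jb_le_add ξ (ξ + ζ)
      have he : ξ - (ξ + ζ) = -ζ := by abel
      rw [he, norm_neg] at this
      exact this
    have hnz : ‖ζ‖ ≤ z := norm_le_jb ζ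
    rw [abs_sub_le_iff]
    constructor <;> linarith
  -- bound on deriv ψ
  have hder1 : ∀ s : ℝ, 1 ≤ s → |deriv ψ s| ≤ C₁ * C₀ := by
    intro s hs
    have h := h1 s hs
    rw [iteratedDeriv_one] at h
    have hψ := hψlin s hs
    have : C₁ * ψ s / s ^ 1 ≤ C₁ * C₀ := by
      rw [div_le_iff₀ (by positivity)]
      nlinarith
    linarith
  by_cases hcase : b ≤ 2 * z
  · -- easy case
    have hbd : |deriv ψ a - deriv ψ b| ≤ C₁ * C₀ + C₁ * C₀ :=
      (abs_sub _ _).trans (add_le_add (hder1 a ha) (hder1 b hb))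
    refine hbd.trans ?_
    rw [le_div_iff₀ (by linarith)]
    nlinarith [mul_le_mul_of_nonneg_left hcase (mul_nonneg hC₁.le hC₀.le),
      mul_nonneg (mul_nonneg hC₂.le hC₀.le) (by linarith : (0:ℝ) ≤ z)]
  · push_neg at hcase
    have hsm : ContDiff ℝ ((⊤ : ℕ∞) : WithTop ℕ∞) ψ := hψsmooth.of_le (by simp)
    have hdiff : Differentiable ℝ (deriv ψ) :=
      ((contDiff_infty_iff_deriv.mp hsm).2).differentiable (by simp)
    have hbound : ∀ x ∈ Icc (b - z) (b + z), ‖deriv (deriv ψ) x‖ ≤ 2 * C₂ * C₀ / b := by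
      intro x hx
      obtain ⟨hxl, hxr⟩ := hx
      have hx1 : 1 ≤ x := by linarith
      have hxb : b ≤ 2 * x := by linarith
      have h := h2 x hx1
      rw [show iteratedDeriv 2 ψ = deriv (deriv ψ) by
        rw [show (2:ℕ) = 1 + 1 from rfl, iteratedDeriv_succ, iteratedDeriv_one]] at h
      rw [Real.norm_eq_abs]
      have hψx := hψlin x hx1
      have hstep1 : C₂ * ψ x / x ^ 2 ≤ C₂ * C₀ / x := by
        rw [div_le_div_iff₀ (by positivity) (by linarith)]
        nlinarith [mul_le_mul_of_nonneg_right (mul_le_mul_of_nonneg_left hψx hC₂.le)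
          (le_trans zero_le_one hx1)]
      have hstep2 : C₂ * C₀ / x ≤ 2 * C₂ * C₀ / b := by
        rw [div_le_div_iff₀ (by linarith) (by linarith)]
        nlinarith [mul_le_mul_of_nonneg_left hxb (mul_nonneg hC₂.le hC₀.le)]
      linarith
    have hmem_b : b ∈ Icc (b - z) (b + z) := ⟨by linarith, by linarith⟩
    have hmem_a : a ∈ Icc (b - z) (b + z) := by
      rw [abs_sub_le_iff] at hab
      exact ⟨by linarith [hab.1, hab.2], by linarith [hab.1, hab.2]⟩
    have key := (convex_Icc (b - z) (b + z)).norm_image_sub_le_of_norm_deriv_le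
      (f := deriv ψ) (fun x _ => (hdiff x)) hbound hmem_b hmem_a
    rw [Real.norm_eq_abs, Real.norm_eq_abs] at key
    have hKz : 2 * C₂ * C₀ / b * |a - b| ≤ 2 * C₂ * C₀ / b * z :=
      mul_le_mul_of_nonneg_left hab (by positivity)
    have hfin : 2 * C₂ * C₀ / b * z ≤ 4 * C₀ * (C₁ + C₂) * z / b := by
      rw [div_mul_eq_mul_div, div_le_div_iff₀ (by linarith) (by linarith)]
      nlinarith [mul_nonneg (mul_nonneg hC₁.le hC₀.le)
          (mul_nonneg (by linarith : (0:ℝ) ≤ z) (by linarith : (0:ℝ) ≤ b)),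
        mul_nonneg (mul_nonneg hC₂.le hC₀.le)
          (mul_nonneg (by linarith : (0:ℝ) ≤ z) (by linarith : (0:ℝ) ≤ b))]
    linarith
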